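/- Let S be an uncountable ω₁-compact subspace of a tree T of height ω₁ and f : S → Y continuous with Y metrizable. Then there exists β < ω₁ such that f is constant on S(x) = {y ∈ S : y ≥ x} whenever x ∈ T has height at least β. In particular, f has countable image. -/

import Mathlib

/-!
ω₁-compactness of `S` means that every uncountable `D ⊆ S` accumulates from below at some
`τ ∈ S`: otherwise each point of `S` has a neighbourhood `(a, τ]` or `{τ}` meeting `D` in at most
that point, and `D` is closed discrete in `S`. Applied to the tops of a maximal family of pairs
`p ≤ q` with separated heights (a pair ending higher starts above the end of the lower one), this
puts whole pairs arbitrarily close below `τ`.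

Fix `ε > 0`. If points whose cone carries `f`-values more than `ε` apart had unbounded height, a
first application would turn them into comparable pairs `v < g` in `S` of unbounded height with
`ε / 2 ≤ dist (f v) (f g)`, and a second would put such pairs arbitrarily close below some
`τ ∈ S`, contradicting continuity at `τ`. Bounding the heights for `ε = 1 / (n + 1)` and taking
the supremum gives `β`. The image is then countable: below `β`, `S` is a countable union of
levels, which are antichains; above `β`, no uncountable set carries an injective `f`, since it
contains some `d₁ < d₂`.
-/

open Set Topology Cardinal Ordinal

universe u v

/-- The order (interval) topology of a tree. -/
def treeTopology (T : Type u) [PartialOrder T] : TopologicalSpace T :=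
  TopologicalSpace.generateFrom
    ({s | ∃ a b : T, a < b ∧ s = Set.Ioc a b} ∪
     {s | ∃ b : T, (∀ a : T, ¬a < b) ∧ s = {b}})

/-- A tree order: the predecessors of every element are well-ordered. -/
def IsTreeOrder (T : Type u) [PartialOrder T] : Prop :=
  ∀ x : T, IsWellOrder {y : T // y < x} (· < ·)

/-- The height of an element: the order type of its set of predecessors. -/
noncomputable def treeHeight {T : Type u} [PartialOrder T] (hT : IsTreeOrder T) (x : T) :
    Ordinal.{u} :=
  @Ordinal.type {y : T // y < x} (· < ·) (hT x)

/-- Hausdorff tree: elements at limit levels are determined by their predecessors. -/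
def IsHausdorffTree (T : Type u) [PartialOrder T] : Prop :=
  ∀ x y : T, Set.Iio x = Set.Iio y → (Set.Iio x).Nonempty →
    (∀ z ∈ Set.Iio x, ∃ w ∈ Set.Iio x, z < w) → x = y

/-- The tree has height ω₁. -/
def HasHeightOmega1 {T : Type u} [PartialOrder T] (hT : IsTreeOrder T) : Prop :=
  (∀ x : T, treeHeight hT x < ω₁) ∧ ∀ α < ω₁, ∃ x : T, treeHeight hT x = α

/-- Downward closure of a subset of a tree. -/
def downClosure {T : Type u} [PartialOrder T] (S : Set T) : Set T := {x | ∃ y ∈ S, x ≤ y}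

/-- `D` is a closed discrete subset of the subspace `S`. -/
def ClosedDiscreteIn {T : Type u} [TopologicalSpace T] (D S : Set T) : Prop :=
  D ⊆ S ∧ closure D ∩ S ⊆ D ∧ ∀ x ∈ D, ∃ U : Set T, IsOpen U ∧ x ∈ U ∧ U ∩ D = {x}

/-- `S` is ω₁-compact in the subspace topology: every closed discrete subset is countable. -/
def OmegaOneCompactIn {T : Type u} [TopologicalSpace T] (S : Set T) : Prop :=
  ∀ D : Set T, ClosedDiscreteIn D S → D.Countable

/-- A club (closed unbounded) subset of `ω₁` (as a set of ordinals, with the order topology). -/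
def IsClubBelowOmega1 (C : Set Ordinal.{u}) : Prop :=
  C ⊆ Set.Iio ω₁ ∧ (∀ α < ω₁, ∃ β ∈ C, α ≤ β) ∧ ∀ α < ω₁, α ∈ closure C → α ∈ C

/-- A stationary subset of `ω₁`. -/
def IsStationaryBelowOmega1 (S : Set Ordinal.{u}) : Prop :=
  S ⊆ Set.Iio ω₁ ∧ ∀ C : Set Ordinal.{u}, IsClubBelowOmega1 C → (S ∩ C).Nonempty

namespace IsTreeOrder

variable {T : Type u} [PartialOrder T]

theorem le_total_of_le (hT : IsTreeOrder T) {u v w : T} (hu : u ≤ w) (hv : v ≤ w) :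
    u ≤ v ∨ v ≤ u := by
  rcases hu.eq_or_lt with rfl | hu
  · exact Or.inr hv
  rcases hv.eq_or_lt with rfl | hv
  · exact Or.inl hu.le
  have := hT w
  rcases trichotomous_of (· < ·) (⟨u, hu⟩ : {y // y < w}) ⟨v, hv⟩ with h | h | h
  · exact Or.inl (le_of_lt h)
  · exact Or.inl (congrArg Subtype.val h).le
  · exact Or.inr (le_of_lt h)

theorem treeHeight_strictMono (hT : IsTreeOrder T) : StrictMono (treeHeight hT) := by
  intro u v huv
  have := hT u
  have := hT v
  refine Ordinal.type_lt_iff.2 ⟨⟨⟨⟨fun y => ⟨y, y.2.trans huv⟩, fun y z h => Subtype.ext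
    (congrArg Subtype.val h :)⟩, Iff.rfl⟩, ⟨u, huv⟩, fun y => ⟨?_, fun hy => ⟨⟨y, hy⟩, rfl⟩⟩⟩⟩
  rintro ⟨z, rfl⟩
  exact z.2

theorem lt_of_treeHeight_lt (hT : IsTreeOrder T) {u v w : T} (hu : u ≤ w) (hv : v ≤ w)
    (h : treeHeight hT u < treeHeight hT v) : u < v := by
  rcases hT.le_total_of_le hu hv with huv | hvu
  · exact huv.lt_of_ne (by rintro rfl; exact h.false)
  · exact absurd (hT.treeHeight_strictMono.monotone hvu) h.not_ge

end IsTreeOrder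

theorem not_countable_of_forall_exists_lt {α : Type*} {h : α → Ordinal.{u}} (hh : ∀ x, h x < ω₁)
    {A : Set α} (hA : ∀ β < ω₁, ∃ x ∈ A, β < h x) : ¬A.Countable := by
  intro hc
  have := hc.to_subtype
  obtain ⟨x, hx, hlt⟩ := hA _ (iSup_lt_omega_one fun x : A => hh x)
  exact hlt.not_ge (Ordinal.le_iSup (fun x : A => h x) ⟨x, hx⟩)

theorem countable_Iio_of_lt_omega_one {β : Ordinal.{u}} (hβ : β < ω₁) : (Iio β).Countable := by
  rw [← le_aleph0_iff_set_countable, Cardinal.mk_Iio_ordinal, lift_le_aleph0,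
    ← lt_aleph_one_iff, ← lt_omega_iff_card_lt]
  exact hβ

theorem exists_separated_subset {α ι : Type*} [LinearOrder ι] (h : α → ι) (κ : ι)
    {P : Set (α × α)} (hle : ∀ π ∈ P, h π.1 ≤ h π.2) (hP : ∀ β < κ, ∃ π ∈ P, β < h π.1) :
    ∃ M ⊆ P, M.Pairwise (fun π π' => h π.2 < h π'.2 → h π.2 < h π'.1) ∧
      ∀ β < κ, ∃ π ∈ M, β < h π.2 := by
  obtain ⟨M, ⟨hMP, hM⟩, hmax⟩ := zorn_subset
    {M | M ⊆ P ∧ M.Pairwise (fun π π' => h π.2 < h π'.2 → h π.2 < h π'.1)}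
    fun c hc hchain => ⟨⋃₀ c, ⟨sUnion_subset fun M hM => (hc hM).1,
      (pairwise_sUnion hchain.directedOn).2 fun M hM => (hc hM).2⟩,
      fun M hM => subset_sUnion_of_mem hM⟩
  refine ⟨M, hMP, hM, fun β hβ => ?_⟩
  by_contra! hbdd
  obtain ⟨π, hπP, hβπ⟩ := hP β hβ
  have hπM : π ∉ M := fun hπ => (hbdd π hπ).not_gt (hβπ.trans_le (hle π hπP))
  have hins : (insert π M).Pairwise (fun π π' => h π.2 < h π'.2 → h π.2 < h π'.1) :=
    hM.insert fun π' hπ' _ =>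
      ⟨fun h' => absurd ((hbdd π' hπ').trans_lt (hβπ.trans_le (hle π hπP))) h'.not_gt,
        fun _ => (hbdd π' hπ').trans_lt hβπ⟩
  exact hπM (hmax ⟨insert_subset hπP hMP, hins⟩ (subset_insert _ _) (mem_insert _ _))

namespace treeTopology

variable {T : Type u} [PartialOrder T] {tT : TopologicalSpace T}

theorem isOpen_Ioc (htop : tT = treeTopology T) {a b : T} (hab : a < b) : IsOpen (Ioc a b) := by
  subst htop
  exact TopologicalSpace.isOpen_generateFrom_of_mem (Or.inl ⟨a, b, hab, rfl⟩)

theorem isOpen_singleton_of_isMin (htop : tT = treeTopology T) {b : T} (hb : IsMin b) :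
    IsOpen ({b} : Set T) := by
  subst htop
  exact TopologicalSpace.isOpen_generateFrom_of_mem (Or.inr ⟨b, fun _ => hb.not_lt, rfl⟩)

theorem exists_Ioc_subset_of_isOpen (hT : IsTreeOrder T) (htop : tT = treeTopology T)
    {V : Set T} (hV : IsOpen V) {τ : T} (hτ : τ ∈ V) (hmin : ¬IsMin τ) :
    ∃ a < τ, Ioc a τ ⊆ V := by
  subst htop
  induction hV generalizing τ with
  | basic s hs =>
    rcases hs with ⟨a, b, hab, rfl⟩ | ⟨b, hb, rfl⟩
    · exact ⟨a, hτ.1, fun c hc => ⟨hc.1, hc.2.trans hτ.2⟩⟩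
    · exact absurd (isMin_iff_forall_not_lt.2 hb) (hτ ▸ hmin)
  | univ =>
    obtain ⟨a, ha⟩ := not_isMin_iff.1 hmin
    exact ⟨a, ha, subset_univ _⟩
  | inter V₁ V₂ _ _ ih₁ ih₂ =>
    obtain ⟨a₁, ha₁, h₁⟩ := ih₁ hτ.1 hmin
    obtain ⟨a₂, ha₂, h₂⟩ := ih₂ hτ.2 hmin
    rcases hT.le_total_of_le ha₁.le ha₂.le with h | h
    · exact ⟨a₂, ha₂, fun c hc => ⟨h₁ ⟨h.trans_lt hc.1, hc.2⟩, h₂ hc⟩⟩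
    · exact ⟨a₁, ha₁, fun c hc => ⟨h₁ hc, h₂ ⟨h.trans_lt hc.1, hc.2⟩⟩⟩
  | sUnion 𝔖 _ ih =>
    obtain ⟨W, hW, hτW⟩ := hτ
    obtain ⟨a, ha, h⟩ := ih W hW hτW hmin
    exact ⟨a, ha, h.trans (subset_sUnion_of_mem hW)⟩

theorem exists_Ioc_subset_preimage_of_continuous (hT : IsTreeOrder T) (htop : tT = treeTopology T)
    {S : Set T} {Y : Type v} [TopologicalSpace Y] {f : S → Y} (hf : Continuous f) {τ : S}
    (hτ : ¬IsMin (τ : T)) {O : Set Y} (hO : IsOpen O) (hτO : f τ ∈ O) :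
    ∃ a < (τ : T), Subtype.val ⁻¹' Ioc a τ ⊆ f ⁻¹' O := by
  obtain ⟨V, hV, hVO⟩ := isOpen_induced_iff.1 (hO.preimage hf)
  obtain ⟨a, ha, haV⟩ :=
    exists_Ioc_subset_of_isOpen hT htop hV (show τ ∈ Subtype.val ⁻¹' V from hVO ▸ hτO) hτ
  exact ⟨a, ha, hVO ▸ preimage_mono haV⟩

end treeTopology

namespace OmegaOneCompactIn

variable {T : Type u} [PartialOrder T] {tT : TopologicalSpace T} {S : Set T}

theorem exists_accumulation_from_below (htop : tT = treeTopology T) (hSc : OmegaOneCompactIn S)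
    {D : Set T} (hDS : D ⊆ S) (hD : ¬D.Countable) :
    ∃ τ ∈ S, ¬IsMin τ ∧ ∀ a < τ, (D ∩ Ioo a τ).Nonempty := by
  by_contra! h
  have isolating : ∀ s ∈ S, ∃ U, IsOpen U ∧ s ∈ U ∧ U ∩ D ⊆ {s} := by
    intro s hs
    by_cases hmin : IsMin s
    · exact ⟨{s}, treeTopology.isOpen_singleton_of_isMin htop hmin, rfl, inter_subset_left⟩
    obtain ⟨a, ha, hempty⟩ := h s hs hmin
    refine ⟨Ioc a s, treeTopology.isOpen_Ioc htop ha, ⟨ha, le_rfl⟩, ?_⟩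
    rintro d ⟨⟨had, hds⟩, hdD⟩
    by_contra hne
    exact hempty.subset ⟨hdD, had, hds.lt_of_ne hne⟩
  refine hD (hSc D ⟨hDS, ?_, fun x hx => ?_⟩)
  · rintro s ⟨hcl, hs⟩
    obtain ⟨U, hU, hsU, hUD⟩ := isolating s hs
    obtain ⟨d, hdU, hdD⟩ := mem_closure_iff.1 hcl U hU hsU
    exact (hUD ⟨hdU, hdD⟩) ▸ hdD
  · obtain ⟨U, hU, hxU, hUD⟩ := isolating x (hDS hx)
    exact ⟨U, hU, hxU, hUD.antisymm (singleton_subset_iff.2 ⟨hxU, hx⟩)⟩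

theorem exists_lt_of_not_countable (htop : tT = treeTopology T) (hSc : OmegaOneCompactIn S)
    {D : Set T} (hDS : D ⊆ S) (hD : ¬D.Countable) : ∃ d₁ ∈ D, ∃ d₂ ∈ D, d₁ < d₂ := by
  obtain ⟨τ, -, hτ, hacc⟩ := hSc.exists_accumulation_from_below htop hDS hD
  obtain ⟨a, ha⟩ := not_isMin_iff.1 hτ
  obtain ⟨d₁, hd₁, -, hd₁τ⟩ := hacc a ha
  obtain ⟨d₂, hd₂, hd₁d₂, -⟩ := hacc d₁ hd₁τ
  exact ⟨d₁, hd₁, d₂, hd₂, hd₁d₂⟩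

theorem countable_inter_treeHeight_lt (hT : IsTreeOrder T) (htop : tT = treeTopology T)
    (hSc : OmegaOneCompactIn S) {β : Ordinal.{u}} (hβ : β < ω₁) :
    (S ∩ {x | treeHeight hT x < β}).Countable := by
  have hlevel : ∀ γ, (S ∩ {x | treeHeight hT x = γ}).Countable := fun γ => by
    by_contra hγ
    obtain ⟨d₁, ⟨-, h₁⟩, d₂, ⟨-, h₂⟩, hlt⟩ :=
      hSc.exists_lt_of_not_countable htop inter_subset_left hγ
    exact (hT.treeHeight_strictMono hlt).ne (h₁.trans h₂.symm)
  refine ((countable_Iio_of_lt_omega_one hβ).biUnion fun γ _ => hlevel γ).mono ?_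
  rintro x ⟨hx, hxβ⟩
  exact mem_biUnion (x := treeHeight hT x) hxβ ⟨hx, rfl⟩

theorem exists_pairs_accumulating (hT : IsTreeOrder T) (htop : tT = treeTopology T)
    (hht : ∀ x, treeHeight hT x < ω₁) (hSc : OmegaOneCompactIn S) {P : Set (T × T)}
    (hPS : ∀ π ∈ P, π.1 ≤ π.2 ∧ π.2 ∈ S) (hP : ∀ β < ω₁, ∃ π ∈ P, β < treeHeight hT π.1) :
    ∃ τ ∈ S, ¬IsMin τ ∧ ∀ a < τ, ∃ π ∈ P, a < π.1 ∧ π.2 < τ := by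
  obtain ⟨M, hMP, hsep, hunb⟩ := exists_separated_subset (treeHeight hT) ω₁
    (fun π hπ => hT.treeHeight_strictMono.monotone (hPS π hπ).1) hP
  have hD : ¬(Prod.snd '' M).Countable := not_countable_of_forall_exists_lt hht fun β hβ => by
    obtain ⟨π, hπ, h⟩ := hunb β hβ
    exact ⟨π.2, mem_image_of_mem _ hπ, h⟩
  obtain ⟨τ, hτS, hτ, hacc⟩ := hSc.exists_accumulation_from_below htop
    (image_subset_iff.2 fun π hπ => (hPS π (hMP hπ)).2) hD
  refine ⟨τ, hτS, hτ, fun a ha => ?_⟩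
  obtain ⟨_, ⟨π₁, hπ₁, rfl⟩, ha₁, h₁τ⟩ := hacc a ha
  obtain ⟨_, ⟨π₂, hπ₂, rfl⟩, h₁₂, h₂τ⟩ := hacc π₁.2 h₁τ
  have hne : π₁ ≠ π₂ := fun h => h₁₂.ne (congrArg Prod.snd h)
  have h₁₂' : π₁.2 < π₂.1 := hT.lt_of_treeHeight_lt h₁₂.le (hPS π₂ (hMP hπ₂)).1
    (hsep hπ₁ hπ₂ hne (hT.treeHeight_strictMono h₁₂))
  exact ⟨π₂, hMP hπ₂, ha₁.trans h₁₂', h₂τ⟩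

end OmegaOneCompactIn

section Oscillation

variable {T : Type u} [PartialOrder T] {tT : TopologicalSpace T} {S : Set T} {Y : Type v}

def OscillatesAbove [PseudoMetricSpace Y] (f : S → Y) (ε : ℝ) (x : T) : Prop :=
  ∃ y z : S, x ≤ y ∧ x ≤ z ∧ ε < dist (f y) (f z)

theorem exists_lt_half_le_dist [PseudoMetricSpace Y] (hT : IsTreeOrder T)
    (htop : tT = treeTopology T) (hht : ∀ x, treeHeight hT x < ω₁) (hSc : OmegaOneCompactIn S)
    {f : S → Y} {ε : ℝ} (hosc : ∀ β < ω₁, ∃ x, OscillatesAbove f ε x ∧ β < treeHeight hT x)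
    {δ : Ordinal.{u}} (hδ : δ < ω₁) :
    ∃ v g : S, δ < treeHeight hT v ∧ (v : T) < g ∧ ε / 2 ≤ dist (f v) (f g) := by
  obtain ⟨τ, -, hτ, hacc⟩ := hSc.exists_pairs_accumulating hT htop hht
    (P := {π | δ < treeHeight hT π.1 ∧ π.1 ≤ π.2 ∧ π.2 ∈ S ∧ OscillatesAbove f ε π.1})
    (fun π hπ => ⟨hπ.2.1, hπ.2.2.1⟩) fun β hβ => by
      obtain ⟨x, hx, hβx⟩ := hosc (max β δ) (max_lt hβ hδ)
      obtain ⟨y, -, hxy, -⟩ := id hx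
      exact ⟨(x, y), ⟨(le_max_right _ _).trans_lt hβx, hxy, y.2, hx⟩,
        (le_max_left _ _).trans_lt hβx⟩
  obtain ⟨a, ha⟩ := not_isMin_iff.1 hτ
  obtain ⟨⟨p, v⟩, ⟨hδp, hpv, hv, -⟩, -, hvτ⟩ := hacc a ha
  obtain ⟨⟨x, _⟩, ⟨-, -, -, y, z, hxy, hxz, hyz⟩, hvx, -⟩ := hacc v hvτ
  have hδv : δ < treeHeight hT v := hδp.trans_le (hT.treeHeight_strictMono.monotone hpv)
  by_cases hvy : ε / 2 ≤ dist (f ⟨v, hv⟩) (f y)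
  · exact ⟨⟨v, hv⟩, y, hδv, hvx.trans_le hxy, hvy⟩
  refine ⟨⟨v, hv⟩, z, hδv, hvx.trans_le hxz, ?_⟩
  linarith [dist_triangle_left (f y) (f z) (f ⟨v, hv⟩)]

theorem exists_bound_treeHeight_oscillatesAbove [PseudoMetricSpace Y] (hT : IsTreeOrder T)
    (htop : tT = treeTopology T) (hht : ∀ x, treeHeight hT x < ω₁) (hSc : OmegaOneCompactIn S)
    {f : S → Y} (hf : Continuous f) {ε : ℝ} (hε : 0 < ε) :
    ∃ β < ω₁, ∀ x, OscillatesAbove f ε x → treeHeight hT x ≤ β := by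
  by_contra! hosc
  obtain ⟨τ, hτS, hτ, hacc⟩ := hSc.exists_pairs_accumulating hT htop hht
    (P := {π | ∃ (h₁ : π.1 ∈ S) (h₂ : π.2 ∈ S),
      π.1 < π.2 ∧ ε / 2 ≤ dist (f ⟨π.1, h₁⟩) (f ⟨π.2, h₂⟩)})
    (fun π ⟨_, h₂, h, _⟩ => ⟨h.le, h₂⟩) fun β hβ => by
      obtain ⟨v, g, hβv, hvg, hdist⟩ := exists_lt_half_le_dist hT htop hht hSc hosc hβ
      exact ⟨(v, g), ⟨v.2, g.2, hvg, hdist⟩, hβv⟩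
  obtain ⟨a, ha, hball⟩ := treeTopology.exists_Ioc_subset_preimage_of_continuous hT htop hf
    (τ := ⟨τ, hτS⟩) hτ Metric.isOpen_ball (Metric.mem_ball_self (by positivity : 0 < ε / 4))
  obtain ⟨⟨v, g⟩, ⟨hv, hg, hvg, hdist⟩, hav, hgτ⟩ := hacc a ha
  have hvτ := Metric.mem_ball.1 (@hball ⟨v, hv⟩ ⟨hav, (hvg.trans hgτ).le⟩)
  have hgτ := Metric.mem_ball.1 (@hball ⟨g, hg⟩ ⟨hav.trans hvg, hgτ.le⟩)
  linarith [dist_triangle_right (f ⟨v, hv⟩) (f ⟨g, hg⟩) (f ⟨τ, hτS⟩)]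

theorem exists_forall_cone_eq [MetricSpace Y] (hT : IsTreeOrder T)
    (htop : tT = treeTopology T) (hht : ∀ x, treeHeight hT x < ω₁) (hSc : OmegaOneCompactIn S)
    {f : S → Y} (hf : Continuous f) :
    ∃ β < ω₁, ∀ x, β ≤ treeHeight hT x → ∀ y z : S, x ≤ y → x ≤ z → f y = f z := by
  choose b hb hosc using fun n : ℕ =>
    exists_bound_treeHeight_oscillatesAbove hT htop hht hSc hf (Nat.one_div_pos_of_nat (n := n))
  refine ⟨Order.succ (⨆ n, b n), (isSuccLimit_omega 1).succ_lt (iSup_lt_omega_one hb),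
    fun x hx y z hxy hxz => ?_⟩
  by_contra hne
  obtain ⟨n, hn⟩ := exists_nat_one_div_lt (dist_pos.2 hne)
  exact (Order.succ_le_iff.1 hx).not_ge
    ((hosc n x ⟨y, z, hxy, hxz, hn⟩).trans (Ordinal.le_iSup b n))

end Oscillation

theorem countable_range_of_forall_cone_eq {T : Type u} [PartialOrder T] {tT : TopologicalSpace T}
    (hT : IsTreeOrder T) (htop : tT = treeTopology T) {S : Set T} (hSc : OmegaOneCompactIn S)
    {Y : Type v} {f : S → Y} {β : Ordinal.{u}} (hβ : β < ω₁)
    (hconst : ∀ x, β ≤ treeHeight hT x → ∀ y z : S, x ≤ y → x ≤ z → f y = f z) :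
    (range f).Countable := by
  have hlow : (f '' {s | treeHeight hT s < β}).Countable := by
    refine (((hSc.countable_inter_treeHeight_lt hT htop hβ).preimage Subtype.val_injective).mono
      ?_).image f
    exact fun s hs => ⟨s.2, hs⟩
  have hhigh : (f '' {s | β ≤ treeHeight hT s}).Countable := by
    obtain ⟨H, hH, hbij⟩ := exists_subset_bijOn {s : S | β ≤ treeHeight hT s} f
    rw [← hbij.image_eq]
    refine Countable.image (countable_of_injective_of_countable_image
      Subtype.val_injective.injOn (by_contra fun hHc => ?_)) f
    obtain ⟨_, ⟨s₁, hs₁, rfl⟩, _, ⟨s₂, hs₂, rfl⟩, hlt⟩ :=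
      hSc.exists_lt_of_not_countable htop (image_subset_iff.2 fun s _ => s.2) hHc
    exact hlt.ne (congrArg Subtype.val
      (hbij.injOn hs₁ hs₂ (hconst _ (hH hs₁) s₁ s₂ le_rfl hlt.le)))
  refine (hlow.union hhigh).mono ?_
  rintro _ ⟨s, rfl⟩
  rcases lt_or_ge (treeHeight hT s) β with h | h
  exacts [Or.inl ⟨s, h, rfl⟩, Or.inr ⟨s, h, rfl⟩]

theorem eventually_constant_on_cones_general {T : Type u} [PartialOrder T]
    [tT : TopologicalSpace T] (htop : tT = treeTopology T)
    (hT : IsTreeOrder T) (hht : HasHeightOmega1 hT)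
    (S : Set T) (hSc : OmegaOneCompactIn S)
    (Y : Type v) [TopologicalSpace Y] [TopologicalSpace.MetrizableSpace Y]
    (f : S → Y) (hf : Continuous f) :
    (∃ β < ω₁, ∀ x : T, β ≤ treeHeight hT x →
      ∀ (y z : T) (hy : y ∈ S) (hz : z ∈ S), x ≤ y → x ≤ z →
        f ⟨y, hy⟩ = f ⟨z, hz⟩) ∧
    (Set.range f).Countable := by
  let _ : MetricSpace Y := TopologicalSpace.metrizableSpaceMetric Y
  obtain ⟨β, hβ, hconst⟩ := exists_forall_cone_eq hT htop hht.1 hSc hf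
  exact ⟨⟨β, hβ, fun x hx y z hy hz => hconst x hx ⟨y, hy⟩ ⟨z, hz⟩⟩,
    countable_range_of_forall_cone_eq hT htop hSc hβ hconst⟩

/-- Let S be an uncountable ω₁-compact subspace of a (Hausdorff) tree T of
height ω₁ and f : S → Y continuous with Y metrizable. Then there is β < ω₁ such that f is
constant on S(x) = {y ∈ S : y ≥ x} whenever x has height at least β. In particular f has
countable image. -/
theorem eventually_constant_on_cones {T : Type u} [PartialOrder T]
    [tT : TopologicalSpace T] (htop : tT = treeTopology T)
    (hT : IsTreeOrder T) (hH : IsHausdorffTree T) (hht : HasHeightOmega1 hT)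
    (S : Set T) (hSu : ¬S.Countable) (hSc : OmegaOneCompactIn S)
    (Y : Type v) [TopologicalSpace Y] [TopologicalSpace.MetrizableSpace Y]
    (f : S → Y) (hf : Continuous f) :
    (∃ β < ω₁, ∀ x : T, β ≤ treeHeight hT x →
      ∀ (y z : T) (hy : y ∈ S) (hz : z ∈ S), x ≤ y → x ≤ z →
        f ⟨y, hy⟩ = f ⟨z, hz⟩) ∧
    (Set.range f).Countable :=
  eventually_constant_on_cones_general (tT := tT) htop hT hht S hSc Y f hf
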